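/- Let n ≥ 0, let a = (a_0,…,a_n) be a composition of non-negative integers, let v ∈ ℤ^{n+1}, let λ be a partition with |λ| = |v|, let k ∈ {0,1,…,n}, and let m ∈ {0,1,…,n}. Let m' be the unique element of {1,…,n+1} with m' ≡ m−k (mod n+1), and write γ^{−(n+1−k)}(v) := (v_k,…,v_n,v_0,…,v_{k−1}) and γ^{k−n−1}(a) := (a_k,…,a_n,a_0,…,a_{k−1}). Then D_{v,λ}(a,m) = q^{v_k+⋯+v_n} · D_{γ^{−(n+1−k)}(v),λ}(γ^{k−n−1}(a), m') if m ≤ k, and D_{v,λ}(a,m) = q^{−(v_0+⋯+v_{k−1})} · D_{γ^{−(n+1−k)}(v),λ}(γ^{k−n−1}(a), m') if m > k. -/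

import Mathlib

/- Laurent polynomials in `N` variables `x_0, …, x_{N-1}` over `K = ℚ(q)`,
constant-term extraction, the q-Dyson product, the symmetric-function data and
the constant term `D_{v,λ}(a,m)` from the paper. -/

noncomputable section

/-- The field `K = ℚ(q)`. -/
abbrev KK : Type := RatFunc ℚ

/-- The indeterminate `q ∈ ℚ(q)`. -/
def qq : KK := RatFunc.X

/-- Laurent polynomials in `x_0, …, x_{N-1}` over `K`. -/
abbrev LL (N : ℕ) : Type := AddMonoidAlgebra KK (Fin N →₀ ℤ)

/-- Constant (scalar) Laurent polynomial. -/
def CK {N : ℕ} (c : KK) : LL N := AddMonoidAlgebra.single 0 c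

/-- The Laurent monomial `x_i^e`. -/
def Xm {N : ℕ} (i : Fin N) (e : ℤ) : LL N := AddMonoidAlgebra.single (Finsupp.single i e) 1

/-- Constant term: the coefficient of `x_0^0 ⋯ x_{N-1}^0`. -/
def CT {N : ℕ} (f : LL N) : KK := f.coeff 0

/-- The complete homogeneous symmetric polynomial `h_r` evaluated at the
(finitely indexed) alphabet `y`. -/
def hsym {N : ℕ} {ι : Type} [Fintype ι] [DecidableEq ι] (y : ι → LL N) (r : ℕ) : LL N :=
  ∑ c ∈ Finset.piAntidiag (Finset.univ : Finset ι) r, ∏ i, y i ^ (c i)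

/-- The alphabet `x_m^{(a)}`, consisting of the `|a|` Laurent monomials
`x_i q^{j - χ(i<m)}` for `0 ≤ i ≤ N-1`, `0 ≤ j ≤ a_i - 1`. -/
def alphabetX {N : ℕ} (a : Fin N → ℕ) (m : ℕ) : ((i : Fin N) × Fin (a i)) → LL N :=
  fun p => Xm p.1 1 * CK (qq ^ ((p.2 : ℤ) - (if (p.1 : ℕ) < m then 1 else 0)))

/-- `h_λ(x_m^{(a)}) = h_{λ_0} h_{λ_1} ⋯` where `λ` is given as the list of its parts. -/
def hPart {N : ℕ} (a : Fin N → ℕ) (m : ℕ) (lam : List ℕ) : LL N :=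
  (lam.map (fun r => hsym (alphabetX a m) r)).prod

/-- The q-shifted factorial `(z; q)_k` for a Laurent polynomial `z`. -/
def qPochL {N : ℕ} (z : LL N) (k : ℕ) : LL N :=
  ∏ i ∈ Finset.range k, (1 - z * CK (qq ^ i))

/-- The q-Dyson product `∏_{0 ≤ i < j ≤ N-1} (x_i/x_j; q)_{a_i} (q x_j/x_i; q)_{a_j}`. -/
def dysonProd {N : ℕ} (a : Fin N → ℕ) : LL N :=
  ∏ p ∈ Finset.univ.filter (fun p : Fin N × Fin N => p.1 < p.2),
    (qPochL (Xm p.1 1 * Xm p.2 (-1)) (a p.1) * qPochL (CK qq * Xm p.2 1 * Xm p.1 (-1)) (a p.2))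

/-- The constant term `D_{v,λ}(a,m)`, with `λ` given as the list of its parts. -/
def Dterm (N : ℕ) (v : Fin N → ℤ) (lam : List ℕ) (a : Fin N → ℕ) (m : ℕ) : KK :=
  CT ((∏ i, Xm i (-(v i))) * hPart a m lam * dysonProd a)

/-- The q-shifted factorial `(z; q)_k` in `K`. -/
def qPochK (z : KK) (k : ℕ) : KK := ∏ i ∈ Finset.range k, (1 - z * qq ^ i)

/-- The q-binomial coefficient `[N choose k]_q = (q^{N-k+1};q)_k / (q;q)_k`
(equal to `0` for `k < 0`). -/
def qBinom (nn : ℤ) (k : ℤ) : KK :=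
  if k < 0 then 0 else qPochK (qq ^ (nn - k + 1)) k.toNat / qPochK qq k.toNat

/-- `v⁺`: the weakly decreasing rearrangement of `v`, as a list. -/
def vplusL {N : ℕ} (v : Fin N → ℕ) : List ℕ :=
  (Multiset.sort (Multiset.map v Finset.univ.val) (· ≤ ·)).reverse

/-- `v⁺` for integer vectors `v`. -/
def vplusLZ {N : ℕ} (v : Fin N → ℤ) : List ℤ :=
  (Multiset.sort (Multiset.map v Finset.univ.val) (· ≤ ·)).reverse

/-! The substitution `x_{k+i} ↦ x_i`, with an extra factor `q⁻¹` on the variables `x_{k+i}` with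
`k + i ≤ n`, is a `K`-algebra automorphism of the Laurent polynomials that preserves constant terms.
It sends the q-Dyson product for `a` to the one for the rotated composition, the monomial `x^{-v}`
to `q^{v_k+⋯+v_n}` times the rotated monomial, and the alphabet `x_m^{(a)}` to `x_{m'}^{(γa)}`,
scaled by `q⁻¹` exactly when `m > k`. By homogeneity `h_λ` then picks up `q^{-|λ|}`, and
`|λ| = v_0+⋯+v_n`. -/

open Finset AddMonoidAlgebra

lemma qq_ne_zero : qq ≠ 0 := RatFunc.X_ne_zero

lemma zpow_sum₀ {G₀ ι : Type*} [CommGroupWithZero G₀] {x : G₀} (hx : x ≠ 0) (s : Finset ι)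
    (f : ι → ℤ) : x ^ ∑ i ∈ s, f i = ∏ i ∈ s, x ^ f i := by
  classical
  induction s using Finset.induction_on with
  | empty => simp
  | insert i s hi ih => rw [sum_insert hi, prod_insert hi, zpow_add₀ hx, ih]

section Substitution

variable {N : ℕ}

lemma CK_eq_algebraMap (c : KK) : CK (N := N) c = algebraMap KK (LL N) c := by
  simp [CK, AddMonoidAlgebra.coe_algebraMap]

lemma CT_CK_mul (c : KK) (f : LL N) : CT (CK c * f) = c * CT f :=
  coeff_single_zero_mul f c 0

lemma CK_zpow_mul_zpow (r s : ℤ) : CK (N := N) (qq ^ r) * CK (qq ^ s) = CK (qq ^ (r + s)) := by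
  simp only [CK_eq_algebraMap, ← map_mul, zpow_add₀ qq_ne_zero]

/-- The `K`-algebra endomorphism `x_i ↦ q ^ c i * x_{σ i}`. -/
def qSubst (σ : Fin N ≃ Fin N) (c : Fin N → ℤ) : LL N →ₐ[KK] LL N :=
  lift KK (LL N) (Fin N →₀ ℤ)
    { toFun := fun e => single (Finsupp.domCongr σ e.toAdd) (qq ^ ∑ i, c i * e.toAdd i)
      map_one' := by simp [one_def]
      map_mul' := fun e f => by
        simp [single_mul_single, -Finsupp.domCongr_apply, mul_add, sum_add_distrib,
          zpow_add₀ qq_ne_zero] }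

lemma qSubst_single (σ : Fin N ≃ Fin N) (c : Fin N → ℤ) (e : Fin N →₀ ℤ) (r : KK) :
    qSubst σ c (single e r) = single (Finsupp.domCongr σ e) (r * qq ^ ∑ i, c i * e i) := by
  simp [qSubst, lift_single, smul_single]

lemma CT_qSubst (σ : Fin N ≃ Fin N) (c : Fin N → ℤ) (f : LL N) : CT (qSubst σ c f) = CT f := by
  induction f using AddMonoidAlgebra.induction_linear with
  | zero => simp
  | add f g hf hg => simp only [CT, map_add, coeff_add, Finsupp.add_apply] at *; rw [hf, hg]
  | single e r =>
    by_cases he : e = 0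
    · simp [CT, qSubst_single, he]
    · have hσe : Finsupp.domCongr σ e ≠ 0 := AddEquivClass.map_ne_zero_iff.2 he
      rw [CT, CT, qSubst_single, coeff_single, coeff_single, Finsupp.single_eq_of_ne hσe.symm,
        Finsupp.single_eq_of_ne (Ne.symm he)]

lemma qSubst_Xm (σ : Fin N ≃ Fin N) (c : Fin N → ℤ) (i : Fin N) (e : ℤ) :
    qSubst σ c (Xm i e) = CK (qq ^ (c i * e)) * Xm (σ i) e := by
  simp [Xm, CK, qSubst_single, single_mul_single, Finsupp.single_apply, Finsupp.domCongr_apply]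

end Substitution

section Hsym

variable {N : ℕ} {ι κ : Type} [Fintype ι] [DecidableEq ι] [Fintype κ] [DecidableEq κ]

lemma hsym_comp_equiv (E : ι ≃ κ) (y : κ → LL N) (r : ℕ) :
    hsym (fun i => y (E i)) r = hsym y r := by
  rw [hsym, hsym]
  refine sum_nbij' (fun c j => c (E.symm j)) (fun d i => d (E i)) ?_ ?_ ?_ ?_ ?_
  · intro c hc
    simp only [mem_piAntidiag, ne_eq, mem_univ, implies_true, and_true] at hc ⊢
    rw [← hc]
    exact Fintype.sum_equiv E.symm _ _ (fun _ => rfl)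
  · intro d hd
    simp only [mem_piAntidiag, ne_eq, mem_univ, implies_true, and_true] at hd ⊢
    rw [← hd]
    exact Fintype.sum_equiv E _ _ (fun _ => rfl)
  · intro c _; simp
  · intro d _; simp
  · intro c _
    exact Fintype.prod_equiv E _ _ (fun i => by simp)

lemma hsym_mul_CK (y : ι → LL N) (c : KK) (r : ℕ) :
    hsym (fun i => y i * CK c) r = CK (c ^ r) * hsym y r := by
  rw [hsym, hsym, mul_sum]
  refine sum_congr rfl fun d hd => ?_
  rw [mem_piAntidiag] at hd
  simp only [mul_pow, prod_mul_distrib, prod_pow_eq_pow_sum, hd.1, CK_eq_algebraMap, map_pow]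
  ring

end Hsym

section AlgHom

variable {N : ℕ} (f : LL N →ₐ[KK] LL N)

lemma AlgHom.map_CK (c : KK) : f (CK c) = CK c := by
  rw [CK_eq_algebraMap, f.commutes]

lemma AlgHom.map_qPochL (z : LL N) (k : ℕ) : f (qPochL z k) = qPochL (f z) k := by
  simp [qPochL, map_prod, f.map_CK]

lemma AlgHom.map_hsym {ι : Type} [Fintype ι] [DecidableEq ι] (y : ι → LL N) (r : ℕ) :
    f (hsym y r) = hsym (fun i => f (y i)) r := by
  simp [hsym, map_sum, map_prod, map_pow]

lemma AlgHom.map_hPart {a b : Fin N → ℕ} {m m' : ℕ}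
    (E : ((j : Fin N) × Fin (b j)) ≃ ((i : Fin N) × Fin (a i))) (c : KK)
    (h : ∀ p, f (alphabetX a m (E p)) = alphabetX b m' p * CK c) (lam : List ℕ) :
    f (hPart a m lam) = CK (c ^ lam.sum) * hPart b m' lam := by
  have hsym_step (r : ℕ) : f (hsym (alphabetX a m) r) = CK (c ^ r) * hsym (alphabetX b m') r := by
    rw [f.map_hsym, ← hsym_comp_equiv E]
    simp only [h]
    exact hsym_mul_CK _ c r
  induction lam with
  | nil => simp [hPart, CK, ← one_def]
  | cons r lam ih =>
    simp only [hPart, List.map_cons, List.prod_cons, map_mul, List.sum_cons, pow_add] at ih ⊢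
    rw [hsym_step, ih, CK_eq_algebraMap, CK_eq_algebraMap, CK_eq_algebraMap, map_mul]
    ring

end AlgHom

section Dyson

variable {N : ℕ}

/-- Giving each orientation `(i, j)` of a pair its own factor turns the q-Dyson product into a
product over ordered pairs `i ≠ j`, which a cyclic relabelling permutes. -/
def dysonFactor (a : Fin N → ℕ) (i j : Fin N) : LL N :=
  qPochL (CK (qq ^ (if j < i then 1 else 0 : ℤ)) * Xm i 1 * Xm j (-1)) (a i)

lemma dysonProd_eq_prod_ne (a : Fin N → ℕ) :
    dysonProd a
      = ∏ p ∈ univ.filter (fun p : Fin N × Fin N => p.1 ≠ p.2), dysonFactor a p.1 p.2 := by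
  have hsplit : univ.filter (fun p : Fin N × Fin N => p.1 ≠ p.2)
      = univ.filter (fun p : Fin N × Fin N => p.1 < p.2) ∪
        univ.filter (fun p : Fin N × Fin N => p.2 < p.1) := by
    rw [← filter_or]
    exact filter_congr fun p _ => ne_iff_lt_or_gt
  have hdisj : Disjoint (univ.filter (fun p : Fin N × Fin N => p.1 < p.2))
      (univ.filter (fun p : Fin N × Fin N => p.2 < p.1)) :=
    disjoint_filter.2 fun p _ h => h.not_gt
  have hswap : ∏ p ∈ univ.filter (fun p : Fin N × Fin N => p.2 < p.1), dysonFactor a p.1 p.2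
      = ∏ p ∈ univ.filter (fun p : Fin N × Fin N => p.1 < p.2), dysonFactor a p.2 p.1 :=
    prod_nbij' Prod.swap Prod.swap (by simp) (by simp) (by simp) (by simp) (by simp)
  rw [hsplit, prod_union hdisj, hswap, ← prod_mul_distrib, dysonProd]
  refine prod_congr rfl fun p hp => ?_
  have hlt : p.1 < p.2 := (mem_filter.1 hp).2
  simp only [dysonFactor, if_pos hlt, if_neg hlt.not_gt, zpow_one, zpow_zero, CK_eq_algebraMap,
    map_one, one_mul]

end Dyson

section Rotation

variable {N : ℕ} [NeZero N]

def rot (k : Fin N) : LL N →ₐ[KK] LL N :=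
  qSubst (Equiv.subRight k) fun i => -(if (k : ℕ) ≤ i then 1 else 0)

lemma rot_Xm_add (k i : Fin N) (e : ℤ) :
    rot k (Xm (k + i) e) = CK (qq ^ (-(if (k : ℕ) ≤ ↑(k + i) then 1 else 0) * e)) * Xm i e := by
  rw [rot, qSubst_Xm, Equiv.subRight_apply, add_sub_cancel_left]

lemma rot_prod_Xm (k : Fin N) (v : Fin N → ℤ) :
    rot k (∏ i, Xm i (-(v i)))
      = CK (qq ^ ∑ i ∈ univ.filter (fun i : Fin N => (k : ℕ) ≤ i), v i)
        * ∏ i, Xm i (-(v (k + i))) := by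
  rw [← Fintype.prod_equiv (Equiv.addLeft k) (fun j => Xm (k + j) (-(v (k + j)))) _ (fun _ => rfl),
    map_prod]
  simp only [rot_Xm_add, prod_mul_distrib, CK_eq_algebraMap, ← map_prod, ← zpow_sum₀ qq_ne_zero]
  congr 3
  rw [sum_filter]
  refine Fintype.sum_equiv (Equiv.addLeft k) _ _ fun j => ?_
  by_cases h : (k : ℕ) ≤ ↑(k + j) <;> simp [h]

lemma rot_dysonFactor (k : Fin N) (a : Fin N → ℕ) (i j : Fin N) :
    rot k (dysonFactor a (k + i) (k + j)) = dysonFactor (fun i => a (k + i)) i j := by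
  have hexp : (if k + j < k + i then 1 else 0 : ℤ) + (-(if (k : ℕ) ≤ ↑(k + i) then 1 else 0) * 1)
      + (-(if (k : ℕ) ≤ ↑(k + j) then 1 else 0) * -1) = if j < i then 1 else 0 := by
    have hi := Fin.val_add_eq_ite k i
    have hj := Fin.val_add_eq_ite k j
    simp only [Fin.lt_def] at *
    split_ifs at * <;> omega
  rw [dysonFactor, dysonFactor, (rot k).map_qPochL, map_mul, map_mul, (rot k).map_CK,
    rot_Xm_add, rot_Xm_add, ← hexp]
  congr 1
  simp only [CK_eq_algebraMap, zpow_add₀ qq_ne_zero, map_mul]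
  ring

lemma rot_dysonProd (k : Fin N) (a : Fin N → ℕ) :
    rot k (dysonProd a) = dysonProd (fun i => a (k + i)) := by
  rw [dysonProd_eq_prod_ne, dysonProd_eq_prod_ne, map_prod, prod_filter, prod_filter]
  refine (Fintype.prod_equiv ((Equiv.addLeft k).prodCongr (Equiv.addLeft k)) _ _ fun p => ?_).symm
  simp [rot_dysonFactor]

lemma CT_rot (k : Fin N) (f : LL N) : CT (rot k f) = CT f := CT_qSubst _ _ f

lemma rot_alphabetX (k : Fin N) (a : Fin N → ℕ) {m m' : ℕ} (hm : m ≤ N)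
    (hm' : m' + k = m + if (k : ℕ) < m then 0 else N) (p : (j : Fin N) × Fin (a (k + j))) :
    rot k (alphabetX a m (Equiv.sigmaCongrLeft (Equiv.addLeft k) p))
      = alphabetX (fun j => a (k + j)) m' p * CK (qq ^ (-(if (k : ℕ) < m then 1 else 0) : ℤ)) := by
  obtain ⟨j, t⟩ := p
  have hexp : -(if (k : ℕ) ≤ ↑(k + j) then 1 else 0) * 1 + ((t : ℤ) - if ↑(k + j) < m then 1 else 0)
      = ((t : ℤ) - if (j : ℕ) < m' then 1 else 0) + -(if (k : ℕ) < m then 1 else 0) := by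
    have := Fin.val_add_eq_ite k j
    split_ifs at * <;> omega
  change rot k (alphabetX a m ⟨k + j, t⟩) = _
  simp only [alphabetX, map_mul, rot_Xm_add, (rot k).map_CK]
  rw [mul_comm (CK _) (Xm j 1), mul_assoc, mul_assoc, CK_zpow_mul_zpow, CK_zpow_mul_zpow, hexp]

lemma Dterm_rotate (k : Fin N) (v : Fin N → ℤ) (lam : List ℕ) (a : Fin N → ℕ) {m m' : ℕ}
    (hm : m ≤ N) (hm' : m' + k = m + if (k : ℕ) < m then 0 else N) :
    Dterm N v lam a m
      = qq ^ (∑ i ∈ univ.filter (fun i : Fin N => (k : ℕ) ≤ i), v i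
          - if (k : ℕ) < m then (lam.sum : ℤ) else 0)
        * Dterm N (fun i => v (k + i)) lam (fun i => a (k + i)) m' := by
  have hPart_rot := (rot k).map_hPart _ _ (rot_alphabetX k a hm hm') lam
  have hscalar : (qq ^ (-(if (k : ℕ) < m then 1 else 0) : ℤ)) ^ lam.sum
      = qq ^ (-(if (k : ℕ) < m then (lam.sum : ℤ) else 0)) := by
    rw [← zpow_natCast, ← zpow_mul]
    split_ifs <;> simp
  rw [Dterm, ← CT_rot k, map_mul, map_mul, rot_prod_Xm, rot_dysonProd, hPart_rot, hscalar, Dterm,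
    sub_eq_add_neg, zpow_add₀ qq_ne_zero, ← CT_CK_mul]
  congr 1
  simp only [CK_eq_algebraMap, map_mul]
  ring

lemma add_eq_of_modEq_sub {N m m' k : ℕ} (hm : m ≤ N) (hk : k < N) (hm'1 : 1 ≤ m')
    (hm'2 : m' ≤ N) (h : (m' : ℤ) ≡ m - k [ZMOD N]) :
    m' + k = m + if k < m then 0 else N := by
  obtain ⟨d, hd⟩ := h.dvd
  have hd_lo : -1 ≤ d := by nlinarith
  have hd_hi : d ≤ 0 := by nlinarith
  obtain rfl | rfl : d = -1 ∨ d = 0 := by omega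
  all_goals split_ifs <;> omega

theorem Dterm_cycle_general (n : ℕ) (a : Fin (n+1) → ℕ) (v : Fin (n+1) → ℤ) (lam : List ℕ)
    (hsum : (lam.sum : ℤ) = ∑ i, v i)
    (k : Fin (n+1)) (m m' : ℕ) (hm : m ≤ n) (hm'1 : 1 ≤ m') (hm'2 : m' ≤ n+1)
    (hcong : (m' : ℤ) ≡ (m : ℤ) - ((k : ℕ) : ℤ) [ZMOD (n+1)]) :
    (m ≤ (k : ℕ) →
      Dterm (n+1) v lam a m =
        qq ^ (∑ i ∈ Finset.univ.filter (fun i : Fin (n+1) => (k : ℕ) ≤ (i : ℕ)), v i) *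
          Dterm (n+1) (fun i => v (k + i)) lam (fun i => a (k + i)) m') ∧
    ((k : ℕ) < m →
      Dterm (n+1) v lam a m =
        qq ^ (-(∑ i ∈ Finset.univ.filter (fun i : Fin (n+1) => (i : ℕ) < (k : ℕ)), v i)) *
          Dterm (n+1) (fun i => v (k + i)) lam (fun i => a (k + i)) m') := by
  have hm' : m' + k = m + if (k : ℕ) < m then 0 else n + 1 :=
    add_eq_of_modEq_sub (by omega) k.isLt hm'1 hm'2 (by exact_mod_cast hcong)
  have hrot := Dterm_rotate k v lam a (by omega : m ≤ n + 1) hm'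
  refine ⟨fun hmk => by rw [hrot, if_neg (not_lt.2 hmk), sub_zero], fun hkm => ?_⟩
  rw [hrot, if_pos hkm, hsum,
    ← sum_filter_add_sum_filter_not univ (fun i : Fin (n+1) => (k : ℕ) ≤ i)]
  simp [not_le]

/-- **Equation (5.5) (cyclic shift).** For `0 ≤ m ≤ n`, `0 ≤ k ≤ n`, and `m'` the unique
element of `{1,…,n+1}` with `m' ≡ m - k (mod n+1)`:
`D_{v,λ}(a,m) = q^{v_k+⋯+v_n} D_{γ^{-(n+1-k)}(v),λ}(γ^{k-n-1}(a), m')` if `m ≤ k`, and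
`D_{v,λ}(a,m) = q^{-(v_0+⋯+v_{k-1})} D_{γ^{-(n+1-k)}(v),λ}(γ^{k-n-1}(a), m')` if `m > k`,
where `γ^{-(n+1-k)}(v) = (v_k,…,v_n,v_0,…,v_{k-1})` is cyclic rotation. -/
theorem Dterm_cycle (n : ℕ) (a : Fin (n+1) → ℕ) (v : Fin (n+1) → ℤ) (lam : List ℕ)
    (hpart : lam.Pairwise (· ≥ ·)) (hsum : (lam.sum : ℤ) = ∑ i, v i)
    (k : Fin (n+1)) (m m' : ℕ) (hm : m ≤ n) (hm'1 : 1 ≤ m') (hm'2 : m' ≤ n+1)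
    (hcong : (m' : ℤ) ≡ (m : ℤ) - ((k : ℕ) : ℤ) [ZMOD (n+1)]) :
    (m ≤ (k : ℕ) →
      Dterm (n+1) v lam a m =
        qq ^ (∑ i ∈ Finset.univ.filter (fun i : Fin (n+1) => (k : ℕ) ≤ (i : ℕ)), v i) *
          Dterm (n+1) (fun i => v (k + i)) lam (fun i => a (k + i)) m') ∧
    ((k : ℕ) < m →
      Dterm (n+1) v lam a m =
        qq ^ (-(∑ i ∈ Finset.univ.filter (fun i : Fin (n+1) => (i : ℕ) < (k : ℕ)), v i)) *
          Dterm (n+1) (fun i => v (k + i)) lam (fun i => a (k + i)) m') :=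
  Dterm_cycle_general n a v lam hsum k m m' hm hm'1 hm'2 hcong
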